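/- arXiv:1711.08989 — 2 statements merged into one kernel-verified Lean document; each statement's English description precedes it below -/
import Mathlib

section
/- Suppose (λ_n) is a sequence of nonzero reals with λ_n → ∞ and tan(λ_n π + θ - β) = C/λ_n + o(1/λ_n) for a constant C, where additionally λ_n ∈ (n + (β-θ)/π - 1/2, n + (β-θ)/π + 1/2) for all large n. Then λ_n - n - (β-θ)/π → 0, and moreover n·(λ_n - n - (β-θ)/π - C/(nπ)) → 0, i.e. λ_n = n + (β-θ)/π + C/(nπ) + o(1/n). -/
open Real Filter

lemma arctan_div_tendsto :
    Tendsto (fun x : ℝ => if x = 0 then (1:ℝ) else Real.arctan x / x) (nhds 0) (nhds 1) := by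
  have hd : HasDerivAt Real.arctan 1 0 := by
    simpa using Real.hasDerivAt_arctan 0
  have hslope : Tendsto (slope Real.arctan 0) (nhdsWithin 0 {0}ᶜ) (nhds 1) :=
    hasDerivAt_iff_tendsto_slope.mp hd
  rw [← nhdsNE_sup_pure (0:ℝ)]
  refine Tendsto.sup ?_ ?_
  · refine hslope.congr' ?_
    filter_upwards [self_mem_nhdsWithin] with x hx
    simp only [Set.mem_compl_iff, Set.mem_singleton_iff] at hx
    simp [slope_def_field, hx]
  · have : (if (0:ℝ) = 0 then (1:ℝ) else Real.arctan 0 / 0) = 1 := by simp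
    simpa [this] using
      (tendsto_pure_nhds (fun x : ℝ => if x = 0 then (1:ℝ) else Real.arctan x / x) 0)

theorem stmt_8 (θ β C : ℝ) (lam : ℕ → ℝ)
    (hne : ∀ n, lam n ≠ 0)
    (htop : Tendsto lam atTop atTop)
    (hloc : ∀ᶠ n : ℕ in atTop,
      lam n ∈ Set.Ioo ((n : ℝ) + (β - θ) / π - 1/2) ((n : ℝ) + (β - θ) / π + 1/2))
    (r : ℕ → ℝ)
    (hr : Tendsto (fun n => lam n * r n) atTop (nhds 0))
    (htan : ∀ n, Real.tan (lam n * π + θ - β) = C / lam n + r n) :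
    Tendsto (fun n : ℕ => lam n - n - (β - θ) / π) atTop (nhds 0) ∧
    Tendsto (fun n : ℕ => (n : ℝ) * (lam n - n - (β - θ) / π - C / (n * π)))
      atTop (nhds 0) := by
  set t : ℕ → ℝ := fun n => C / lam n + r n with ht
  set δ : ℕ → ℝ := fun n => lam n - n - (β - θ) / π with hδ
  have hinv : Tendsto (fun n => (lam n)⁻¹) atTop (nhds 0) := htop.inv_tendsto_atTop
  have hCdiv : Tendsto (fun n => C / lam n) atTop (nhds 0) := by
    have := hinv.const_mul C
    simpa [div_eq_mul_inv] using this
  have hrz : Tendsto r atTop (nhds 0) := by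
    have h := hr.mul hinv
    rw [mul_zero] at h
    refine h.congr fun n => ?_
    rw [mul_comm (lam n) (r n), mul_assoc, mul_inv_cancel₀ (hne n), mul_one]
  have htz : Tendsto t atTop (nhds 0) := by
    have := hCdiv.add hrz
    simpa using this
  have hlt : Tendsto (fun n => lam n * t n) atTop (nhds C) := by
    have heq : (fun n => lam n * t n) = fun n => C + lam n * r n := by
      funext n
      have := hne n
      field_simp [ht]
      simp only [ht]; rw [mul_add, mul_comm (lam n) (C / lam n), div_mul_cancel₀ C this]
    rw [heq]
    simpa using tendsto_const_nhds.add hr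
  -- lam n * arctan (t n) → C
  have hg : Tendsto (fun n => if t n = 0 then (1:ℝ) else Real.arctan (t n) / t n)
      atTop (nhds 1) := arctan_div_tendsto.comp htz
  have hla : Tendsto (fun n => lam n * Real.arctan (t n)) atTop (nhds C) := by
    have h := hlt.mul hg
    rw [mul_one] at h
    refine h.congr fun n => ?_
    by_cases h0 : t n = 0
    · simp [h0]
    · field_simp [h0]
      rw [if_neg h0, mul_assoc, mul_comm (t n) (Real.arctan (t n) / t n), div_mul_cancel₀ _ h0]
  -- eventual identity: arctan (t n) = δ n * π
  have hππ : (0:ℝ) < π := Real.pi_pos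
  have hkey : ∀ᶠ n : ℕ in atTop, Real.arctan (t n) = δ n * π := by
    filter_upwards [hloc] with n hn
    obtain ⟨h1, h2⟩ := hn
    have hδ1 : -(1/2 : ℝ) < δ n := by simp only [hδ]; linarith
    have hδ2 : δ n < 1/2 := by simp only [hδ]; linarith
    have hlb : -(π/2) < δ n * π := by nlinarith
    have hub : δ n * π < π/2 := by nlinarith
    have hper : Real.tan (δ n * π + n * π) = Real.tan (δ n * π) :=
      (Real.tan_periodic.nat_mul n) (δ n * π)
    have hc : (β - θ) / π * π = β - θ := div_mul_cancel₀ _ Real.pi_ne_zero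
    have harg : lam n * π + θ - β = δ n * π + n * π := by
      simp only [hδ]; linear_combination hc
    have hteq : Real.tan (δ n * π) = t n := by
      rw [← hper, ← harg, htan n]
    rw [← hteq, Real.arctan_tan hlb hub]
  -- Part 1
  have hδz : Tendsto δ atTop (nhds 0) := by
    have ha : Tendsto (fun n => Real.arctan (t n) / π) atTop (nhds 0) := by
      have := (Real.continuous_arctan.tendsto 0).comp htz
      rw [Real.arctan_zero] at this
      simpa using this.div_const π
    refine ha.congr' ?_
    filter_upwards [hkey] with n h
    rw [h]
    field_simp
  refine ⟨hδz, ?_⟩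
  -- n / lam n → 1
  have hsub : Tendsto (fun n : ℕ => lam n - n) atTop (nhds ((β - θ) / π)) := by
    have := hδz.add (tendsto_const_nhds (x := (β - θ) / π))
    rw [zero_add] at this
    refine this.congr fun n => ?_
    simp only [hδ]; ring
  have hratio : Tendsto (fun n : ℕ => (n : ℝ) / lam n) atTop (nhds 1) := by
    have h1 : Tendsto (fun n : ℕ => (lam n - n) * (lam n)⁻¹) atTop (nhds 0) := by
      have := hsub.mul hinv
      simpa using this
    have h2 := (tendsto_const_nhds (x := (1:ℝ))).sub h1
    rw [sub_zero] at h2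
    refine h2.congr fun n => ?_
    rw [eq_div_iff (hne n), sub_mul, inv_mul_cancel_right₀ (hne n), one_mul]
    ring
  have hnδ : Tendsto (fun n : ℕ => (n : ℝ) * δ n) atTop (nhds (C / π)) := by
    have h := (hratio.mul hla).div_const π
    rw [one_mul] at h
    refine h.congr' ?_
    filter_upwards [hkey] with n h
    rw [h]
    have := hne n
    field_simp
  have hfin := hnδ.sub (tendsto_const_nhds (x := C / π))
  rw [sub_self] at hfin
  refine hfin.congr' ?_
  filter_upwards [eventually_ge_atTop 1] with n hn
  have hn0 : (n : ℝ) ≠ 0 := Nat.cast_ne_zero.mpr (by omega)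
  simp only [hδ]
  field_simp
end

section
/- Let ν : [0,π] → ℝ be continuously differentiable with ν(π) = 0, θ, β, d ∈ ℝ real constants, and let (x_n) be a sequence in (0,π) converging to x ∈ (0,π) such that λ_n·x_n - ν(x_n) + θ = j_n π + s_n/(2λ_n) + o(1/λ_n), where λ_n = n + d/π + o(1/n), j_n ∈ ℤ, and s_n → s ∈ ℝ. Then n·(x_n - j_n π/n) converges to -x·d/π + ν(x) - θ. -/
open Real Filter

theorem stmt_12 (θ d s₀ x : ℝ) (hx : x ∈ Set.Ioo (0:ℝ) π)
    (ν : ℝ → ℝ) (hν : ContDiffOn ℝ 1 ν (Set.Icc 0 π)) (hνπ : ν π = 0)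
    (lam : ℕ → ℝ)
    (hlam : Tendsto (fun n : ℕ => (n : ℝ) * (lam n - n - d / π)) atTop (nhds 0))
    (xs : ℕ → ℝ) (hxs : ∀ n, xs n ∈ Set.Ioo (0:ℝ) π)
    (hxsx : Tendsto xs atTop (nhds x))
    (j : ℕ → ℤ) (s : ℕ → ℝ) (hs : Tendsto s atTop (nhds s₀))
    (ε : ℕ → ℝ) (hε : Tendsto (fun n => lam n * ε n) atTop (nhds 0))
    (heq : ∀ n, lam n * xs n - ν (xs n) + θ - (j n : ℝ) * π - s n / (2 * lam n) = ε n) :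
    Tendsto (fun n : ℕ => (n : ℝ) * (xs n - (j n : ℝ) * π / n)) atTop
      (nhds (-x * d / π + ν x - θ)) := by
  set g : ℕ → ℝ := fun n => lam n - n - d / π with hg
  have h1 : Tendsto g atTop (nhds 0) := by
    have h := hlam.mul (tendsto_inv_atTop_zero.comp tendsto_natCast_atTop_atTop)
    rw [zero_mul] at h
    refine h.congr' ?_
    filter_upwards [eventually_ge_atTop 1] with n hn
    have h0 : (n : ℝ) ≠ 0 := Nat.cast_ne_zero.mpr (by omega)
    show (n : ℝ) * (lam n - n - d / π) * ((n : ℝ))⁻¹ = g n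
    rw [mul_comm ((n : ℝ)), mul_assoc, mul_inv_cancel₀ h0, mul_one]
  have hlamtop : Tendsto lam atTop atTop := by
    have h2 : Tendsto (fun n : ℕ => (n : ℝ) + d / π) atTop atTop :=
      tendsto_atTop_add_const_right _ _ tendsto_natCast_atTop_atTop
    have := h1.add_atTop h2
    refine this.congr fun n => by simp only [hg]; ring
  have hinv : Tendsto (fun n => (lam n)⁻¹) atTop (nhds 0) :=
    hlamtop.inv_tendsto_atTop
  have hε0 : Tendsto ε atTop (nhds 0) := by
    have h := hε.mul hinv
    rw [zero_mul] at h
    refine h.congr' ?_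
    filter_upwards [hlamtop.eventually_ge_atTop 1] with n hn
    have : lam n ≠ 0 := by linarith
    field_simp
  have hs0 : Tendsto (fun n => s n / (2 * lam n)) atTop (nhds 0) := by
    have h2 : Tendsto (fun n => 2 * lam n) atTop atTop :=
      hlamtop.const_mul_atTop two_pos
    have := hs.mul h2.inv_tendsto_atTop
    rw [mul_zero] at this
    exact this.congr fun n => (div_eq_mul_inv _ _).symm
  have hIcc : Set.Icc 0 π ∈ nhds x :=
    Filter.mem_of_superset (isOpen_Ioo.mem_nhds hx) Set.Ioo_subset_Icc_self
  have hνc : Tendsto (fun n => ν (xs n)) atTop (nhds (ν x)) :=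
    ((hν.continuousOn.continuousAt hIcc).tendsto).comp hxsx
  have key : Tendsto
      (fun n => -(g n * xs n) - (d / π) * xs n + ν (xs n) - θ + s n / (2 * lam n) + ε n)
      atTop (nhds (-(0 * x) - (d / π) * x + ν x - θ + 0 + 0)) :=
    ((((((h1.mul hxsx).neg).sub (tendsto_const_nhds.mul hxsx)).add hνc).sub
      tendsto_const_nhds).add hs0).add hε0
  have hval : -(0 * x) - (d / π) * x + ν x - θ + 0 + 0 = -x * d / π + ν x - θ := by ring
  rw [hval] at key
  refine key.congr' ?_
  filter_upwards [eventually_ge_atTop 1] with n hn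
  have hn0 : (n : ℝ) ≠ 0 := Nat.cast_ne_zero.mpr (by omega)
  have h := heq n
  have hj : (j n : ℝ) * π = lam n * xs n - ν (xs n) + θ - s n / (2 * lam n) - ε n := by
    linarith
  simp only [hg]
  rw [hj]
  field_simp
  ring
end
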